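/- arXiv:2211.10505 — 7 statements merged into one kernel-verified Lean document; each statement's English description precedes it below -/
import Mathlib

section
/- Let G be a group of orientation-preserving homeomorphisms of ℝ such that every element of G other than the identity has exactly one fixed point. Then there is a point x₀ ∈ ℝ with g(x₀) = x₀ for every g ∈ G. -/
/-!
If some `f ≠ 1` in `G` satisfies `x ≤ f x` everywhere, its fixed point `p` is global: for `h`
moving `p`, both `f` and `h f h⁻¹` lie above the identity and have different fixed points, so
`f h f h⁻¹` has no fixed point.

Otherwise every element lying above the identity near `+∞` is repelling at its fixed point.
Comparing germs at `+∞` then totally orders `G`, bi-invariantly, and since a repelling element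
pushes points to `±∞`, this order is Archimedean. By Hölder's theorem `G` is abelian, and an
element commuting with some `g ≠ 1` preserves the unique fixed point of `g`.
-/

/-- The group of self-homeomorphisms of a topological space,
with `(f * g) x = f (g x)`. -/
instance homeomorphSelfGroup {X : Type*} [TopologicalSpace X] : Group (X ≃ₜ X) where
  mul f g := g.trans f
  one := Homeomorph.refl X
  inv := Homeomorph.symm
  mul_assoc _ _ _ := rfl
  one_mul _ := rfl
  mul_one _ := rfl
  inv_mul_cancel f := Homeomorph.ext fun x => f.symm_apply_apply x

open Filter Topology Function Set

section Holder

variable {α : Type*} [Group α] [LinearOrder α] [MulLeftMono α] [MulRightMono α]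

omit [MulRightMono α] in
theorem zpow_right_strictMono_of_one_lt {a : α} (ha : 1 < a) : StrictMono fun n : ℤ => a ^ n :=
  strictMono_int_of_lt_succ fun k => by rw [zpow_add_one]; exact lt_mul_of_one_lt_right' _ ha

theorem sq_mul_sq_le_mul_sq {x y : α} (h : x * y ≤ y * x) : x ^ 2 * y ^ 2 ≤ (x * y) ^ 2 := by
  calc x ^ 2 * y ^ 2 = x * (x * y) * y := by simp only [sq, mul_assoc]
    _ ≤ x * (y * x) * y := mul_le_mul_left (mul_le_mul_right h x) y
    _ = (x * y) ^ 2 := by simp only [sq, mul_assoc]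

theorem mul_sq_le_sq_mul_sq {x y : α} (h : x * y ≤ y * x) : (y * x) ^ 2 ≤ y ^ 2 * x ^ 2 := by
  calc (y * x) ^ 2 = y * (x * y) * x := by simp only [sq, mul_assoc]
    _ ≤ y * (y * x) * x := mul_le_mul_left (mul_le_mul_right h y) x
    _ = y ^ 2 * x ^ 2 := by simp only [sq, mul_assoc]

variable (harch : ∀ a b : α, 1 < a → ∃ n : ℕ, b < a ^ n)
include harch

theorem exists_zpow_le_lt_zpow_add_one {a : α} (ha : 1 < a) (b : α) :
    ∃ m : ℤ, a ^ m ≤ b ∧ b < a ^ (m + 1) := by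
  obtain ⟨N, hN⟩ := harch a b ha
  obtain ⟨K, hK⟩ := harch a b⁻¹ ha
  have hbdd : ∀ m : ℤ, a ^ m ≤ b → m ≤ N := fun m hm =>
    ((zpow_right_strictMono_of_one_lt ha).lt_iff_lt.mp (hm.trans_lt (zpow_natCast a N ▸ hN))).le
  have hK' : a ^ (-(K : ℤ)) ≤ b := by
    rw [zpow_neg, zpow_natCast]; exact (inv_lt'.mp hK).le
  obtain ⟨m, hm, hmax⟩ := Int.exists_greatest_of_bdd ⟨N, hbdd⟩ ⟨_, hK'⟩
  exact ⟨m, hm, lt_of_not_ge fun h => (hmax _ h).not_gt (lt_add_one m)⟩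

theorem commute_of_archimedean (x y : α) : Commute x y := by
  wlog hxy : x * y < y * x generalizing x y
  · rcases (not_lt.mp hxy).eq_or_lt with h | h
    · exact h.symm
    · exact (this y x h).symm
  set a := x * y
  set d := a⁻¹ * (y * x)
  have hd : 1 < d := by simpa [d] using hxy
  have had : y * x = a * d := by simp [d]
  have floor_lt {i j : ℤ} {w : α} (hi : d ^ i ≤ w) (hj : w < d ^ j) : i < j :=
    (zpow_right_strictMono_of_one_lt hd).lt_iff_lt.mp (hi.trans_lt hj)
  obtain ⟨mx, hmx, hmx'⟩ := exists_zpow_le_lt_zpow_add_one harch hd (x ^ 2)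
  obtain ⟨my, hmy, hmy'⟩ := exists_zpow_le_lt_zpow_add_one harch hd (y ^ 2)
  obtain ⟨ma, hma, hma'⟩ := exists_zpow_le_lt_zpow_add_one harch hd (a ^ 2)
  obtain ⟨mb, hmb, hmb'⟩ := exists_zpow_le_lt_zpow_add_one harch hd ((y * x) ^ 2)
  -- With `⌊w⌋ := m` for `d ^ m ≤ w < d ^ (m + 1)`, the inequalities `x²y² ≤ a²` and
  -- `(yx)² ≤ y²x²` give `⌊(yx)²⌋ ≤ ⌊a²⌋ + 1`, whereas `(yx)² = (ad)²` gives `⌊(yx)²⌋ ≥ ⌊a²⌋ + 2`.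
  exfalso
  have h1 : mx + my < ma + 1 := floor_lt (w := a ^ 2) (by
    rw [zpow_add]; exact (mul_le_mul' hmx hmy).trans (sq_mul_sq_le_mul_sq hxy.le)) hma'
  have h2 : mb < my + 1 + (mx + 1) := floor_lt hmb (by
    rw [zpow_add]; exact (mul_sq_le_sq_mul_sq hxy.le).trans_lt (mul_lt_mul_of_lt_of_lt hmy' hmx'))
  have h3 : ma + 2 < mb + 1 := by
    refine floor_lt ?_ hmb'
    rw [had]
    rcases le_total (a * d) (d * a) with h | h
    · rw [zpow_add, zpow_two, ← sq]
      exact (mul_le_mul_left hma _).trans (sq_mul_sq_le_mul_sq h)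
    · rw [add_comm, zpow_add, zpow_two, ← sq]
      exact (mul_le_mul_right hma _).trans ((sq_mul_sq_le_mul_sq h).trans (pow_le_pow_left' h 2))
  omega

end Holder

section FixedPoints

variable {α : Type*} [LinearOrder α] [TopologicalSpace α]

theorem IsPreconnected.forall_apply_lt_or_forall_lt_apply [OrderClosedTopology α] {s : Set α}
    (hs : IsPreconnected s) {f : α → α} (hf : ContinuousOn f s) (hfix : ∀ x ∈ s, f x ≠ x) :
    (∀ x ∈ s, f x < x) ∨ (∀ x ∈ s, x < f x) := by
  by_contra! ⟨⟨a, ha, hfa⟩, ⟨b, hb, hfb⟩⟩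
  obtain ⟨x, hx, hfx⟩ := hs.intermediate_value₂ hb ha hf continuousOn_id hfb hfa
  exact hfix x hx hfx

end FixedPoints

section Iterates

variable {α : Type*} [ConditionallyCompleteLinearOrder α] [TopologicalSpace α] [OrderTopology α]

theorem tendsto_iterate_atTop_of_lt_apply {f : α → α} (hf : Continuous f) {y : α}
    (hy : ∀ x, y ≤ x → x < f x) : Tendsto (fun n => f^[n] y) atTop atTop := by
  have hge : ∀ n, y ≤ f^[n] y := by
    intro n
    induction n with
    | zero => exact le_rfl
    | succ n ih => rw [iterate_succ_apply']; exact ih.trans (hy _ ih).le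
  have hmono : Monotone fun n => f^[n] y := monotone_nat_of_le_succ fun n => by
    rw [iterate_succ_apply']; exact (hy _ (hge n)).le
  refine (tendsto_atTop_of_monotone hmono).resolve_right fun ⟨l, hl⟩ => ?_
  have hyl : y ≤ l := ge_of_tendsto' hl hge
  exact (hy l hyl).ne (isFixedPt_of_tendsto_iterate hl hf.continuousAt).symm

theorem tendsto_iterate_atBot_of_apply_lt {f : α → α} (hf : Continuous f) {y : α}
    (hy : ∀ x, x ≤ y → f x < x) : Tendsto (fun n => f^[n] y) atTop atBot :=
  tendsto_iterate_atTop_of_lt_apply (α := αᵒᵈ) hf hy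

theorem lt_apply_of_apply_lt_of_lt_apply [DenselyOrdered α] {f : α → α} (hf : Continuous f)
    (huniq : ∀ x y, f x = x → f y = y → x = y) {a b : α} (hab : a ≤ b) (ha : f a < a)
    (hb : b < f b) : ∀ x, b ≤ x → x < f x := by
  obtain ⟨q, hq, hfq⟩ := isPreconnected_Icc.intermediate_value₂ (right_mem_Icc.2 hab)
    (left_mem_Icc.2 hab) continuousOn_id hf.continuousOn hb.le ha.le
  have hqb : q < b := hq.2.lt_of_ne fun h => hb.ne (h ▸ hfq)
  rcases isPreconnected_Ioi.forall_apply_lt_or_forall_lt_apply hf.continuousOn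
    (fun x hx hfx => hx.ne' (huniq _ _ hfx hfq.symm)) with h | h
  · exact absurd (h b hqb) hb.not_gt
  · exact fun x hx => h x (hqb.trans_le hx)

end Iterates

theorem Homeomorph.coe_pow {X : Type*} [TopologicalSpace X] (f : X ≃ₜ X) (n : ℕ) :
    ⇑(f ^ n) = (⇑f)^[n] :=
  hom_coe_pow _ rfl (fun _ _ => rfl) f n

theorem Homeomorph.apply_eq_of_isFixedPt_mul_conj {X : Type*} [TopologicalSpace X] [PartialOrder X]
    {f h : X ≃ₜ X} (hh : Monotone h) (hle : ∀ x, x ≤ f x) {p : X} (hp : ∀ y, f y = y → y = p)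
    {x : X} (hx : IsFixedPt ⇑(f * (h * f * h⁻¹)) x) : h p = p := by
  have hx' : f (h (f (h.symm x))) = x := hx
  have hcx : x ≤ h (f (h.symm x)) := by simpa using hh (hle (h.symm x))
  have hc : h (f (h.symm x)) = x := le_antisymm ((hle _).trans hx'.le) hcx
  have hfx : f x = x := by rwa [hc] at hx'
  have hfx' : f (h.symm x) = h.symm x := by simpa using congrArg h.symm hc
  exact (h.symm_apply_eq.mp (hp _ hfx')).symm.trans (hp _ hfx)

def GermLT (f g : ℝ ≃ₜ ℝ) : Prop := ∀ᶠ x in atTop, f x < g x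

theorem GermLT.mul_left {f g k : ℝ ≃ₜ ℝ} (hk : StrictMono k) (h : GermLT f g) :
    GermLT (k * f) (k * g) :=
  h.mono fun _ hx => hk hx

theorem GermLT.mul_right {f g k : ℝ ≃ₜ ℝ} (hk : Monotone k) (h : GermLT f g) :
    GermLT (f * k) (g * k) :=
  (tendsto_atTop_atTop_of_monotone hk fun b => ⟨k.symm b, (k.apply_symm_apply b).ge⟩).eventually h

section Subgroup

variable {G : Subgroup (ℝ ≃ₜ ℝ)} (hmono : ∀ g ∈ G, StrictMono (g : ℝ → ℝ))
  (hfix : ∀ g ∈ G, g ≠ 1 → ∃! x : ℝ, g x = x)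
include hmono hfix

theorem germLT_or_germLT_of_ne {f g : ℝ ≃ₜ ℝ} (hf : f ∈ G) (hg : g ∈ G) (hne : f ≠ g) :
    GermLT f g ∨ GermLT g f := by
  obtain ⟨p, -, huniq⟩ := hfix (g⁻¹ * f) (mul_mem (inv_mem hg) hf)
    fun h => hne (inv_mul_eq_one.mp h).symm
  refine (isPreconnected_Ioi.forall_apply_lt_or_forall_lt_apply (g⁻¹ * f).continuous.continuousOn
    fun x hx hfx => hx.ne' (huniq x hfx)).imp (fun h => ?_) (fun h => ?_) <;>
  refine (eventually_gt_atTop p).mono fun x hx => ?_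
  · simpa using hmono g hg (h x hx)
  · simpa using hmono g hg (h x hx)

theorem apply_eq_of_forall_le_apply {f : ℝ ≃ₜ ℝ} (hf : f ∈ G) (hle : ∀ x, x ≤ f x) {p : ℝ}
    (hp : ∀ y, f y = y → y = p) {h : ℝ ≃ₜ ℝ} (hh : h ∈ G) : h p = p := by
  have hc : f * (h * f * h⁻¹) ∈ G := mul_mem hf (mul_mem (mul_mem hh hf) (inv_mem hh))
  obtain ⟨x, hx⟩ : ∃ x, (f * (h * f * h⁻¹)) x = x := by
    by_cases h1 : f * (h * f * h⁻¹) = 1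
    · exact ⟨p, by rw [h1]; rfl⟩
    · exact (hfix _ hc h1).exists
  exact Homeomorph.apply_eq_of_isFixedPt_mul_conj (hmono h hh).monotone hle hp hx

omit hmono in
theorem repelling_of_germLT_one (hpar : ∀ f ∈ G, (∀ x, x ≤ f x) → f = 1) {d : ℝ ≃ₜ ℝ}
    (hd : d ∈ G) (h1 : GermLT 1 d) : ∃ p, (∀ x < p, d x < x) ∧ (∀ x > p, x < d x) := by
  have hd1 : d ≠ 1 := by
    rintro rfl
    obtain ⟨x, hx⟩ := h1.exists
    exact lt_irrefl _ hx
  obtain ⟨p, hp, huniq⟩ := hfix d hd hd1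
  have hnofix : ∀ s : Set ℝ, p ∉ s → ∀ x ∈ s, d x ≠ x := fun s hps x hx hdx =>
    hps (huniq x hdx ▸ hx)
  have hgt : ∀ x > p, x < d x := by
    refine (isPreconnected_Ioi.forall_apply_lt_or_forall_lt_apply d.continuous.continuousOn
      (hnofix _ (lt_irrefl p))).resolve_left fun h => ?_
    obtain ⟨x, hxp, hx⟩ := ((eventually_gt_atTop p).and h1).exists
    exact (h x hxp).not_gt hx
  refine ⟨p, (isPreconnected_Iio.forall_apply_lt_or_forall_lt_apply d.continuous.continuousOn
    (hnofix _ (lt_irrefl p))).resolve_right fun hlt => hd1 (hpar d hd fun x => ?_), hgt⟩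
  rcases lt_trichotomy x p with h | rfl | h
  · exact (hlt x h).le
  · exact hp.ge
  · exact (hgt x h).le

theorem exists_germLT_pow {d v : ℝ ≃ₜ ℝ} (hv : v ∈ G) (hd : d ∈ G) {p : ℝ}
    (hlt : ∀ x < p, d x < x) (hgt : ∀ x > p, x < d x) : ∃ n : ℕ, GermLT v (d ^ n) := by
  have hup := tendsto_iterate_atTop_of_lt_apply d.continuous (y := p + 1)
    fun x hx => hgt x (by linarith)
  have hdown := tendsto_iterate_atBot_of_apply_lt d.continuous (y := p - 1)
    fun x hx => hlt x (by linarith)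
  obtain ⟨n, hn⟩ := ((hup.eventually_gt_atTop (v (p + 1))).and
    (hdown.eventually_lt_atBot (v (p - 1)))).exists
  -- `v⁻¹ dⁿ` crosses the diagonal upwards between `p - 1` and `p + 1`; having a single fixed
  -- point, it stays above the diagonal beyond `p + 1`.
  have hw : v⁻¹ * d ^ n ∈ G := mul_mem (inv_mem hv) (pow_mem hd n)
  have hvw : ∀ x, v ((v⁻¹ * d ^ n) x) = (⇑d)^[n] x := fun x => by
    simp [Homeomorph.coe_pow]
  have hw₁ : (v⁻¹ * d ^ n) (p - 1) < p - 1 := (hmono v hv).lt_iff_lt.mp (hvw _ ▸ hn.2)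
  have hw₂ : p + 1 < (v⁻¹ * d ^ n) (p + 1) := (hmono v hv).lt_iff_lt.mp (hvw _ ▸ hn.1)
  have huniq : ∀ x y, (v⁻¹ * d ^ n) x = x → (v⁻¹ * d ^ n) y = y → x = y := fun _ _ =>
    (hfix _ hw fun h => by rw [h] at hw₂; exact lt_irrefl _ hw₂).unique
  refine ⟨n, (eventually_ge_atTop (p + 1)).mono fun x hx => ?_⟩
  have := (hmono v hv) (lt_apply_of_apply_lt_of_lt_apply (v⁻¹ * d ^ n).continuous huniq
    (by linarith) hw₁ hw₂ x hx)
  rwa [hvw, ← Homeomorph.coe_pow] at this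

theorem commute_of_forall_le_apply_eq_one (hpar : ∀ f ∈ G, (∀ x, x ≤ f x) → f = 1) (f g : G) :
    Commute f g := by
  classical
  let r : G → G → Prop := fun f g => GermLT f g
  have : IsStrictTotalOrder G r :=
    { trichotomous := fun a b hab hba => by_contra fun hne =>
        (germLT_or_germLT_of_ne hmono hfix a.2 b.2 (Subtype.coe_injective.ne hne)).elim hab hba
      irrefl := fun a ha => by obtain ⟨x, hx⟩ := ha.exists; exact lt_irrefl _ hx
      trans := fun a b c hab hbc => (hab.and hbc).mono fun x hx => hx.1.trans hx.2 }
  let : LinearOrder G := linearOrderOfSTO r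
  have : MulLeftStrictMono G := ⟨fun k a b h => GermLT.mul_left (hmono k k.2) h⟩
  have : MulRightStrictMono G := ⟨fun k a b h => GermLT.mul_right (hmono k k.2).monotone h⟩
  have := mulLeftMono_of_mulLeftStrictMono G
  have := mulRightMono_of_mulRightStrictMono G
  refine commute_of_archimedean (fun d v hd => ?_) f g
  obtain ⟨p, hlt, hgt⟩ := repelling_of_germLT_one hfix hpar d.2 hd
  obtain ⟨n, hn⟩ := exists_germLT_pow hmono hfix v.2 d.2 hlt hgt
  exact ⟨n, show r v (d ^ n) by simpa [r] using hn⟩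

end Subgroup

/-- Solodov-type statement: a group of orientation-preserving homeomorphisms of `ℝ`
in which every nontrivial element has exactly one fixed point has a global fixed
point. -/
theorem solodov_common_fixed_point
    (G : Subgroup (ℝ ≃ₜ ℝ))
    (hmono : ∀ g ∈ G, StrictMono (g : ℝ → ℝ))
    (hfix : ∀ g ∈ G, g ≠ 1 → ∃! x : ℝ, g x = x) :
    ∃ x₀ : ℝ, ∀ g ∈ G, g x₀ = x₀ := by
  by_cases hpar : ∀ f ∈ G, (∀ x, x ≤ f x) → f = 1
  · by_cases htriv : ∀ g ∈ G, g = 1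
    · exact ⟨0, fun g hg => by rw [htriv g hg]; rfl⟩
    push Not at htriv
    obtain ⟨g₀, hg₀, hg₀1⟩ := htriv
    obtain ⟨a, ha, huniq⟩ := hfix g₀ hg₀ hg₀1
    refine ⟨a, fun h hh => huniq _ ?_⟩
    have hcomm := commute_of_forall_le_apply_eq_one hmono hfix hpar ⟨g₀, hg₀⟩ ⟨h, hh⟩
    calc g₀ (h a) = h (g₀ a) := congrArg (fun k : G => (k : ℝ ≃ₜ ℝ) a) hcomm.eq
      _ = h a := by rw [ha]
  · push Not at hpar
    obtain ⟨f, hf, hle, hf1⟩ := hpar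
    obtain ⟨p, -, hp⟩ := hfix f hf hf1
    exact ⟨p, fun h hh => apply_eq_of_forall_le_apply hmono hfix hf hle hp hh⟩
end

section
/- Let G be a group of homeomorphisms of ℝ² in which every element has product form, satisfying Axiom (A1), and such that the set of points fixed by at least one non-identity element of G is dense in ℝ². Then: (i) for every g ∈ G with g ≠ id, writing g(x,y) = (g₁(x), g₂(y)), neither g₁ nor g₂ is the identity of ℝ, and each of g₁ and g₂ has at most one fixed point in ℝ; (ii) no point x₀ ∈ ℝ satisfies g₁(x₀) = x₀ for all g ∈ G, and no point y₀ ∈ ℝ satisfies g₂(y₀) = y₀ for all g ∈ G. -/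
/-- A homeomorphism of `ℝ` is topologically contracting if all forward orbits
converge to a single point. -/
def TopContracting (f : ℝ ≃ₜ ℝ) : Prop :=
  ∃ p : ℝ, ∀ y : ℝ, Filter.Tendsto (fun n => (⇑f)^[n] y) Filter.atTop (nhds p)

/-- A homeomorphism of `ℝ` is topologically expanding if its inverse is
topologically contracting. -/
def TopExpanding (f : ℝ ≃ₜ ℝ) : Prop := TopContracting f.symm

/-- A homeomorphism of `ℝ²` has product form if it acts separately on the two
coordinates by homeomorphisms of `ℝ`. -/
def ProductForm (F : (ℝ × ℝ) ≃ₜ (ℝ × ℝ)) : Prop :=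
  ∃ f₁ f₂ : ℝ ≃ₜ ℝ, ∀ p : ℝ × ℝ, F p = (f₁ p.1, f₂ p.2)

/-- Axiom (A1) for a group of product-form homeomorphisms of the trivially
bifoliated plane `ℝ²`. -/
def AxiomA1 (G : Subgroup ((ℝ × ℝ) ≃ₜ (ℝ × ℝ))) : Prop :=
  ∀ g ∈ G, g ≠ 1 → ∀ f₁ f₂ : ℝ ≃ₜ ℝ, (∀ p : ℝ × ℝ, g p = (f₁ p.1, f₂ p.2)) →
    ((∃ x : ℝ, f₁ x = x) ∨ (∃ y : ℝ, f₂ y = y)) →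
    ((TopContracting f₁ ∧ TopExpanding f₂) ∨ (TopExpanding f₁ ∧ TopContracting f₂))

open Function

/-
A contracting (or expanding) homeomorphism of `ℝ` has at most one fixed point: a fixed point is
its own constant orbit, so it must be the common limit of all orbits. Axiom (A1) therefore leaves
each coordinate map of a nontrivial element with at most one fixed point, and in particular makes
it different from the identity. If a coordinate action had a global fixed point `x₀`, density of
the fixed points would give a nontrivial `g` fixing some `p` with `p.1 ≠ x₀`, so that the
coordinate map of `g` would fix both `p.1` and `x₀`.
-/

theorem TopContracting.fixedPoints_subsingleton {f : ℝ ≃ₜ ℝ} (hf : TopContracting f) :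
    (fixedPoints f).Subsingleton := by
  obtain ⟨p, hp⟩ := hf
  have eq_limit : ∀ x ∈ fixedPoints f, x = p := fun x hx => by
    have orbit_const : (fun n => (⇑f)^[n] x) = fun _ => x :=
      funext fun n => (hx : IsFixedPt f x).iterate n
    exact tendsto_nhds_unique tendsto_const_nhds (orbit_const ▸ hp x)
  exact fun x hx x' hx' => (eq_limit x hx).trans (eq_limit x' hx').symm

theorem TopExpanding.fixedPoints_subsingleton {f : ℝ ≃ₜ ℝ} (hf : TopExpanding f) :
    (fixedPoints f).Subsingleton :=
  fixedPoints_symm (e := f.toEquiv) ▸ TopContracting.fixedPoints_subsingleton hf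

theorem exists_apply_ne_of_fixedPoints_subsingleton {α : Type*} [Nontrivial α] {f : α → α}
    (hf : (fixedPoints f).Subsingleton) : ∃ x, f x ≠ x := by
  by_contra! hid
  obtain ⟨x, x', hne⟩ := exists_pair_ne α
  exact hne (hf (hid x) (hid x'))

theorem AxiomA1.fixedPoints_subsingleton {G : Subgroup ((ℝ × ℝ) ≃ₜ (ℝ × ℝ))} (hA1 : AxiomA1 G)
    {g : (ℝ × ℝ) ≃ₜ (ℝ × ℝ)} (hg : g ∈ G) (hne : g ≠ 1) {f₁ f₂ : ℝ ≃ₜ ℝ}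
    (hf : ∀ p : ℝ × ℝ, g p = (f₁ p.1, f₂ p.2)) :
    (fixedPoints f₁).Subsingleton ∧ (fixedPoints f₂).Subsingleton := by
  by_cases hfix : (∃ x, f₁ x = x) ∨ (∃ y, f₂ y = y)
  · rcases hA1 g hg hne f₁ f₂ hf hfix with ⟨h₁, h₂⟩ | ⟨h₁, h₂⟩
    · exact ⟨h₁.fixedPoints_subsingleton, h₂.fixedPoints_subsingleton⟩
    · exact ⟨h₁.fixedPoints_subsingleton, h₂.fixedPoints_subsingleton⟩
  · push Not at hfix
    exact ⟨fun x hx => absurd hx (hfix.1 x), fun y hy => absurd hy (hfix.2 y)⟩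

theorem not_exists_forall_fixed_of_dense_fixedPoints {X Y : Type*} [TopologicalSpace X]
    [TopologicalSpace Y] [T1Space Y] [Nontrivial Y] {G : Subgroup (X ≃ₜ X)}
    (hdense : Dense {p : X | ∃ g ∈ G, g ≠ 1 ∧ g p = p}) {π : X → Y} (hπ : Continuous π)
    {σ : Y → X} (hσ : LeftInverse π σ)
    (hsemiconj : ∀ g ∈ G, g ≠ 1 → ∃ f : Y → Y, Semiconj π g f ∧ (fixedPoints f).Subsingleton) :
    ¬ ∃ y₀ : Y, ∀ g ∈ G, π (g (σ y₀)) = y₀ := by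
  rintro ⟨y₀, hy₀⟩
  obtain ⟨y₁, hy₁⟩ := exists_ne y₀
  obtain ⟨p, ⟨g, hg, hne, hgp⟩, hp⟩ := hdense.exists_mem_open
    (isOpen_compl_singleton.preimage hπ) ⟨σ y₁, by simpa [hσ y₁] using hy₁⟩
  obtain ⟨f, hπf, hf⟩ := hsemiconj g hg hne
  have fixed_p : f (π p) = π p := by rw [← hπf, hgp]
  have fixed_y₀ : f y₀ = y₀ := by rw [← hσ y₀, ← hπf, hσ y₀, hy₀ g hg]
  exact hp (hf fixed_p fixed_y₀)

/-- For a product-form group satisfying Axiom (A1) with dense fixed points: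
(i) the coordinate maps of every nontrivial element are nontrivial and have at most
one fixed point each; (ii) neither coordinate action has a global fixed point. -/
theorem coordinate_actions_solodov_hypotheses
    (G : Subgroup ((ℝ × ℝ) ≃ₜ (ℝ × ℝ)))
    (hprod : ∀ g ∈ G, ProductForm g)
    (hA1 : AxiomA1 G)
    (hfixdense : Dense {p : ℝ × ℝ | ∃ g ∈ G, g ≠ 1 ∧ g p = p}) :
    (∀ g ∈ G, g ≠ 1 → ∀ f₁ f₂ : ℝ ≃ₜ ℝ, (∀ p : ℝ × ℝ, g p = (f₁ p.1, f₂ p.2)) →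
      ((∃ x : ℝ, f₁ x ≠ x) ∧ (∃ y : ℝ, f₂ y ≠ y) ∧
       (∀ x x' : ℝ, f₁ x = x → f₁ x' = x' → x = x') ∧
       (∀ y y' : ℝ, f₂ y = y → f₂ y' = y' → y = y'))) ∧
    (¬ ∃ x₀ : ℝ, ∀ g ∈ G, (g (x₀, (0 : ℝ))).1 = x₀) ∧
    (¬ ∃ y₀ : ℝ, ∀ g ∈ G, (g ((0 : ℝ), y₀)).2 = y₀) := by
  refine ⟨fun g hg hne f₁ f₂ hf => ?_, ?_, ?_⟩
  · obtain ⟨h₁, h₂⟩ := hA1.fixedPoints_subsingleton hg hne hf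
    exact ⟨exists_apply_ne_of_fixedPoints_subsingleton h₁,
      exists_apply_ne_of_fixedPoints_subsingleton h₂,
      fun _ _ hx hx' => h₁ hx hx', fun _ _ hy hy' => h₂ hy hy'⟩
  · refine not_exists_forall_fixed_of_dense_fixedPoints hfixdense continuous_fst
      (σ := fun x => (x, 0)) (fun _ => rfl) fun g hg hne => ?_
    obtain ⟨f₁, f₂, hf⟩ := hprod g hg
    exact ⟨f₁, fun p => by rw [hf], (hA1.fixedPoints_subsingleton hg hne hf).1⟩
  · refine not_exists_forall_fixed_of_dense_fixedPoints hfixdense continuous_snd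
      (σ := fun y => (0, y)) (fun _ => rfl) fun g hg hne => ?_
    obtain ⟨f₁, f₂, hf⟩ := hprod g hg
    exact ⟨f₂, fun p => by rw [hf], (hA1.fixedPoints_subsingleton hg hne hf).2⟩
end

section
/- Let a, b, c, d ∈ ℝ with a ≠ 0 and c ≠ 0, and let g be the homeomorphism of ℝ² given by g(x,y) = (a x + b, c y + d); assume g ≠ id. Suppose that whenever g maps some vertical or horizontal line of ℝ² to itself, one of the coordinate maps x ↦ a x + b, y ↦ c y + d is topologically contracting on ℝ and the other is topologically expanding on ℝ. Then a = 1 if and only if c = 1; and if a ≠ 1, then either |a| > 1 and |c| < 1, or |a| < 1 and |c| > 1. -/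
/-! Each coordinate map is affine, and an affine map of `ℝ` whose slope is not `1` has a fixed
point, so the hypothesis applies as soon as `a ≠ 1` or `c ≠ 1`. Two orbits of `x ↦ kx + m`
differ by `kⁿ` times their initial difference; if all orbits converge to a common point this
forces `kⁿ → 0`, i.e. `|k| < 1`. Hence one of `|a|, |c|` is `< 1` and the inverse slope of the
other is `< 1`, which excludes the slope `1` for both coordinates. -/

/-- A self-map of `ℝ` is topologically contracting if all forward orbits converge
to a single point. -/
def TopContractingFun (f : ℝ → ℝ) : Prop :=
  ∃ p : ℝ, ∀ y : ℝ, Filter.Tendsto (fun n => f^[n] y) Filter.atTop (nhds p)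

open Filter Topology

lemma TopContractingFun.tendsto_iterate_sub {f : ℝ → ℝ} (hf : TopContractingFun f) (y z : ℝ) :
    Tendsto (fun n => f^[n] y - f^[n] z) atTop (𝓝 0) := by
  obtain ⟨p, hp⟩ := hf
  simpa using (hp y).sub (hp z)

lemma iterate_affine_sub (k m : ℝ) (n : ℕ) (y z : ℝ) :
    (fun x => k * x + m)^[n] y - (fun x => k * x + m)^[n] z = k ^ n * (y - z) := by
  induction n with
  | zero => simp
  | succ n ih =>
    simp only [Function.iterate_succ_apply']
    linear_combination k * ih

lemma abs_lt_one_of_topContractingFun_affine {k m : ℝ}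
    (h : TopContractingFun (fun x => k * x + m)) : |k| < 1 := by
  have hpow := h.tendsto_iterate_sub 1 0
  simp only [iterate_affine_sub, sub_zero, mul_one] at hpow
  exact tendsto_pow_atTop_nhds_zero_iff.mp hpow

lemma one_lt_abs_of_topContractingFun_affine_inv {k m : ℝ} (hk : k ≠ 0)
    (h : TopContractingFun (fun x => (x - m) / k)) : 1 < |k| := by
  have hinv : (fun x => (x - m) / k) = fun x => k⁻¹ * x + -m / k := by
    funext x
    ring
  rw [hinv] at h
  have := abs_lt_one_of_topContractingFun_affine h
  rwa [abs_inv, inv_lt_one₀ (abs_pos.mpr hk)] at this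

lemma exists_affine_fixed_point {k : ℝ} (hk : k ≠ 1) (m : ℝ) : ∃ x : ℝ, k * x + m = x :=
  ⟨m / (1 - k), by field_simp [sub_ne_zero.mpr hk.symm]; ring⟩

theorem affine_linear_parts_general
    (a b c d : ℝ) (ha : a ≠ 0) (hc : c ≠ 0)
    (hhyp : ((∃ x : ℝ, a * x + b = x) ∨ (∃ y : ℝ, c * y + d = y)) →
      ((TopContractingFun (fun x => a * x + b) ∧
        TopContractingFun (fun y => (y - d) / c)) ∨
       (TopContractingFun (fun x => (x - b) / a) ∧
        TopContractingFun (fun y => c * y + d)))) :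
    (a = 1 ↔ c = 1) ∧
    (a ≠ 1 → ((1 < |a| ∧ |c| < 1) ∨ (|a| < 1 ∧ 1 < |c|))) := by
  have key : a ≠ 1 ∨ c ≠ 1 → (1 < |a| ∧ |c| < 1) ∨ (|a| < 1 ∧ 1 < |c|) := by
    intro hslope
    have hfix : (∃ x : ℝ, a * x + b = x) ∨ (∃ y : ℝ, c * y + d = y) :=
      hslope.imp (exists_affine_fixed_point · b) (exists_affine_fixed_point · d)
    rcases hhyp hfix with ⟨hx, hy⟩ | ⟨hx, hy⟩
    · exact .inr ⟨abs_lt_one_of_topContractingFun_affine hx,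
        one_lt_abs_of_topContractingFun_affine_inv hc hy⟩
    · exact .inl ⟨one_lt_abs_of_topContractingFun_affine_inv ha hx,
        abs_lt_one_of_topContractingFun_affine hy⟩
  refine ⟨⟨fun ha1 => ?_, fun hc1 => ?_⟩, fun ha1 => key (.inl ha1)⟩
  · by_contra hc1
    rcases key (.inr hc1) with ⟨h, -⟩ | ⟨h, -⟩ <;> simp [ha1] at h
  · by_contra ha1
    rcases key (.inl ha1) with ⟨-, h⟩ | ⟨-, h⟩ <;> simp [hc1] at h

/-- Constraints on the linear parts of an element `(x,y) ↦ (ax+b, cy+d)` of an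
Anosov-like affine action on the trivially bifoliated plane: if the element is not
the identity and satisfies the hyperbolicity alternative whenever it preserves a
vertical or horizontal line, then `a = 1 ↔ c = 1`, and if `a ≠ 1` then one of
`|a|, |c|` is `> 1` and the other `< 1`. -/
theorem affine_linear_parts
    (a b c d : ℝ) (ha : a ≠ 0) (hc : c ≠ 0)
    (hne : ∃ p : ℝ × ℝ, (a * p.1 + b, c * p.2 + d) ≠ p)
    (hhyp : ((∃ x : ℝ, a * x + b = x) ∨ (∃ y : ℝ, c * y + d = y)) →
      ((TopContractingFun (fun x => a * x + b) ∧
        TopContractingFun (fun y => (y - d) / c)) ∨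
       (TopContractingFun (fun x => (x - b) / a) ∧
        TopContractingFun (fun y => c * y + d)))) :
    (a = 1 ↔ c = 1) ∧
    (a ≠ 1 → ((1 < |a| ∧ |c| < 1) ∨ (|a| < 1 ∧ 1 < |c|))) :=
  affine_linear_parts_general a b c d ha hc hhyp
end

section
/- Let λ₁, λ₂, λ₃ be nonzero real numbers such that λ₁, λ₂ are algebraically independent over ℚ and λ₁, λ₃ are algebraically independent over ℚ. Let t, a, b, b' be the homeomorphisms of ℝ given by t(x) = x + 1, a(x) = λ₁x, b(x) = λ₂x, b'(x) = λ₃x, and let G₂ and G₃ be the subgroups of the homeomorphism group of ℝ generated by {t, a, b} and {t, a, b'} respectively. Then there is a group isomorphism Φ : G₂ → G₃ with Φ(t) = t, Φ(a) = a and Φ(b) = b'. -/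
/-!
Both groups are faithful images of one abstract group. Let `K = ℚ(X, Y)` and let `K ⋊ Kˣ` be
its affine group. Algebraic independence extends `X ↦ λ₁, Y ↦ λᵢ` to a field embedding
`σᵢ : K → ℝ`, which induces an injective homomorphism `K ⋊ Kˣ → Homeo(ℝ)` sending the translation
by `1` and the dilations by `X` and `Y` to the generators of `Gᵢ`. Hence `G₂` and `G₃` are both
isomorphic to the subgroup of `K ⋊ Kˣ` generated by these three elements.
-/

namespace Subgroup

variable {G H K : Type*} [Group G] [Group H] [Group K]

noncomputable def closureEquivOfInjective (f : G →* H) (hf : Function.Injective f) {s : Set G}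
    {t : Set H} (hst : f '' s = t) : closure s ≃* closure t :=
  ((closure s).equivMapOfInjective f hf).trans
    (MulEquiv.subgroupCongr (by rw [MonoidHom.map_closure, hst]))

theorem coe_closureEquivOfInjective_apply (f : G →* H) (hf : Function.Injective f) {s : Set G}
    {t : Set H} (hst : f '' s = t) (x : closure s) :
    (closureEquivOfInjective f hf hst x : H) = f x :=
  rfl

theorem exists_closure_mulEquiv_of_injective (f : G →* H) (g : G →* K)
    (hf : Function.Injective f) (hg : Function.Injective g) {s : Set G} {t : Set H}
    {u : Set K} (hst : f '' s = t) (hsu : g '' s = u) :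
    ∃ Φ : closure t ≃* closure u,
      ∀ x ∈ s, ∀ (y : H) (hy : y ∈ closure t), y = f x → (Φ ⟨y, hy⟩ : K) = g x := by
  refine ⟨(closureEquivOfInjective f hf hst).symm.trans (closureEquivOfInjective g hg hsu),
    fun x hx y hy hyx => ?_⟩
  have hsymm : (closureEquivOfInjective f hf hst).symm ⟨y, hy⟩ = ⟨x, subset_closure hx⟩ := by
    rw [MulEquiv.symm_apply_eq]
    exact Subtype.ext hyx
  rw [MulEquiv.trans_apply, hsymm, coe_closureEquivOfInjective_apply]

end Subgroup

/-- `⟨b, u⟩` stands for the affine map `x ↦ b + u x`. -/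
abbrev AffineGroup (R : Type*) [Ring R] :=
  Multiplicative R ⋊[(MulAutMultiplicative R).symm.toMonoidHom.comp
    (DistribMulAction.toAddAut Rˣ R)] Rˣ

namespace AffineGroup

variable {R 𝕜 : Type*} [Ring R] [DivisionRing 𝕜] [TopologicalSpace 𝕜]
  [SeparatelyContinuousAdd 𝕜] [SeparatelyContinuousMul 𝕜]

def translationHom (σ : R →+* 𝕜) : Multiplicative R →* (𝕜 ≃ₜ 𝕜) where
  toFun b := Homeomorph.addLeft (σ b.toAdd)
  map_one' := by ext; simp
  map_mul' _ _ := by ext; simp [add_assoc]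

def dilationHom (σ : R →+* 𝕜) : Rˣ →* (𝕜 ≃ₜ 𝕜) where
  toFun u := Homeomorph.mulLeft₀ (σ u) (u.isUnit.map σ).ne_zero
  map_one' := by ext; simp
  map_mul' u v := by
    ext x
    show σ ↑(u * v) * x = σ u * (σ v * x)
    rw [Units.val_mul, map_mul, mul_assoc]

def toHomeomorph (σ : R →+* 𝕜) : AffineGroup R →* (𝕜 ≃ₜ 𝕜) :=
  SemidirectProduct.lift (translationHom σ) (dilationHom σ) fun u => by
    ext b x
    show σ (u • b) + x = σ u * (σ b + (σ u)⁻¹ * x)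
    rw [Units.smul_def, smul_eq_mul, map_mul, mul_add, ← mul_assoc,
      mul_inv_cancel₀ (u.isUnit.map σ).ne_zero, one_mul]

theorem toHomeomorph_apply (σ : R →+* 𝕜) (g : AffineGroup R) (x : 𝕜) :
    toHomeomorph σ g x = σ g.left.toAdd + σ g.right * x :=
  rfl

theorem toHomeomorph_injective {σ : R →+* 𝕜} (hσ : Function.Injective σ) :
    Function.Injective (toHomeomorph σ) := by
  refine (injective_iff_map_eq_one _).2 fun g hg => ?_
  have h₀ : σ g.left.toAdd = 0 := by simpa [toHomeomorph_apply] using congr($hg 0)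
  have h₁ : σ g.right = 1 := by simpa [toHomeomorph_apply, h₀] using congr($hg 1)
  exact SemidirectProduct.ext (hσ (h₀.trans σ.map_zero.symm))
    (Units.ext (hσ (h₁.trans σ.map_one.symm)))

theorem toHomeomorph_inl (σ : R →+* 𝕜) (b : R) :
    toHomeomorph σ (SemidirectProduct.inl (Multiplicative.ofAdd b))
      = Homeomorph.addLeft (σ b) :=
  Homeomorph.ext fun x => by
    rw [toHomeomorph_apply, SemidirectProduct.left_inl, SemidirectProduct.right_inl]; simp

theorem toHomeomorph_inr (σ : R →+* 𝕜) (u : Rˣ) {c : 𝕜} (hc : c ≠ 0) (hu : σ u = c) :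
    toHomeomorph σ (SemidirectProduct.inr u) = Homeomorph.mulLeft₀ c hc :=
  Homeomorph.ext fun x => by
    rw [toHomeomorph_apply, SemidirectProduct.left_inr, SemidirectProduct.right_inr, hu]; simp

end AffineGroup

section Generic

open MvPolynomial

variable (ι F : Type*) [Field F]

noncomputable def genericUnit (i : ι) : (FractionRing (MvPolynomial ι F))ˣ :=
  Units.mk0 (algebraMap (MvPolynomial ι F) _ (X i)) (by simp [X_ne_zero])

def genericAffineGenerators : Set (AffineGroup (FractionRing (MvPolynomial ι F))) :=
  insert (SemidirectProduct.inl (Multiplicative.ofAdd 1))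
    (Set.range fun i => SemidirectProduct.inr (genericUnit ι F i))

variable {ι F} {𝕜 : Type*} [Field 𝕜] [Algebra F 𝕜] {x : ι → 𝕜}

noncomputable def AlgebraicIndependent.genericLift (hx : AlgebraicIndependent F x) :
    FractionRing (MvPolynomial ι F) →+* 𝕜 :=
  IsFractionRing.lift (algebraicIndependent_iff_injective_aeval.2 hx)

theorem AlgebraicIndependent.genericLift_genericUnit (hx : AlgebraicIndependent F x) (i : ι) :
    hx.genericLift (genericUnit ι F i) = x i := by
  simp [AlgebraicIndependent.genericLift, genericUnit]

variable [TopologicalSpace 𝕜] [SeparatelyContinuousAdd 𝕜] [SeparatelyContinuousMul 𝕜]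

theorem AlgebraicIndependent.image_genericAffineGenerators (hx : AlgebraicIndependent F x) :
    AffineGroup.toHomeomorph hx.genericLift '' genericAffineGenerators ι F
      = insert (Homeomorph.addLeft 1)
          (Set.range fun i => Homeomorph.mulLeft₀ (x i) (hx.ne_zero i)) := by
  rw [genericAffineGenerators, Set.image_insert_eq, ← Set.range_comp,
    AffineGroup.toHomeomorph_inl, map_one]
  congr 2
  funext i
  exact AffineGroup.toHomeomorph_inr _ _ _ (hx.genericLift_genericUnit i)

theorem AlgebraicIndependent.exists_mulEquiv_closure_translation_dilations {y : ι → 𝕜}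
    (hx : AlgebraicIndependent F x) (hy : AlgebraicIndependent F y) {S T : Set (𝕜 ≃ₜ 𝕜)}
    (hS : S = insert (Homeomorph.addLeft 1)
      (Set.range fun i => Homeomorph.mulLeft₀ (x i) (hx.ne_zero i)))
    (hT : T = insert (Homeomorph.addLeft 1)
      (Set.range fun i => Homeomorph.mulLeft₀ (y i) (hy.ne_zero i))) :
    ∃ Φ : Subgroup.closure S ≃* Subgroup.closure T,
      (∀ h, (Φ ⟨Homeomorph.addLeft 1, h⟩ : 𝕜 ≃ₜ 𝕜) = Homeomorph.addLeft 1) ∧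
      ∀ i h, (Φ ⟨Homeomorph.mulLeft₀ (x i) (hx.ne_zero i), h⟩ : 𝕜 ≃ₜ 𝕜)
        = Homeomorph.mulLeft₀ (y i) (hy.ne_zero i) := by
  obtain ⟨Φ, hΦ⟩ := Subgroup.exists_closure_mulEquiv_of_injective _ _
    (AffineGroup.toHomeomorph_injective hx.genericLift.injective)
    (AffineGroup.toHomeomorph_injective hy.genericLift.injective)
    (hx.image_genericAffineGenerators.trans hS.symm)
    (hy.image_genericAffineGenerators.trans hT.symm)
  refine ⟨Φ, fun h => ?_, fun i h => ?_⟩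
  · rw [hΦ _ (Set.mem_insert _ _) _ h (by rw [AffineGroup.toHomeomorph_inl, map_one]),
      AffineGroup.toHomeomorph_inl, map_one]
  · rw [hΦ _ (Set.mem_insert_of_mem _ ⟨i, rfl⟩) _ h
      (AffineGroup.toHomeomorph_inr _ _ _ (hx.genericLift_genericUnit i)).symm,
      AffineGroup.toHomeomorph_inr _ _ _ (hy.genericLift_genericUnit i)]

end Generic

/-- The groups of homeomorphisms of `ℝ` generated by `x ↦ x + 1`, `x ↦ λ₁x`, `x ↦ λ₂x`
and by `x ↦ x + 1`, `x ↦ λ₁x`, `x ↦ λ₃x` are isomorphic, by an isomorphism fixing the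
first two generators and exchanging `x ↦ λ₂x` with `x ↦ λ₃x`. -/
theorem affine_counterexample_groups_isomorphic
    (l₁ l₂ l₃ : ℝ) (h₁ : l₁ ≠ 0) (h₂ : l₂ ≠ 0) (h₃ : l₃ ≠ 0)
    (hind₂ : AlgebraicIndependent ℚ ![l₁, l₂])
    (hind₃ : AlgebraicIndependent ℚ ![l₁, l₃]) :
    ∃ Φ : (Subgroup.closure
             {Homeomorph.addLeft (1 : ℝ), Homeomorph.mulLeft₀ l₁ h₁,
              Homeomorph.mulLeft₀ l₂ h₂} : Subgroup (ℝ ≃ₜ ℝ)) ≃*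
          (Subgroup.closure
             {Homeomorph.addLeft (1 : ℝ), Homeomorph.mulLeft₀ l₁ h₁,
              Homeomorph.mulLeft₀ l₃ h₃} : Subgroup (ℝ ≃ₜ ℝ)),
      ((Φ ⟨Homeomorph.addLeft (1 : ℝ),
            Subgroup.subset_closure (Set.mem_insert _ _)⟩ : ℝ ≃ₜ ℝ)
          = Homeomorph.addLeft (1 : ℝ)) ∧
      ((Φ ⟨Homeomorph.mulLeft₀ l₁ h₁,
            Subgroup.subset_closure
              (Set.mem_insert_of_mem _ (Set.mem_insert _ _))⟩ : ℝ ≃ₜ ℝ)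
          = Homeomorph.mulLeft₀ l₁ h₁) ∧
      ((Φ ⟨Homeomorph.mulLeft₀ l₂ h₂,
            Subgroup.subset_closure
              (Set.mem_insert_of_mem _
                (Set.mem_insert_of_mem _ rfl))⟩ : ℝ ≃ₜ ℝ)
          = Homeomorph.mulLeft₀ l₃ h₃) := by
  have generators_eq (l : ℝ) (h : l ≠ 0) (hind : AlgebraicIndependent ℚ ![l₁, l]) :
      {Homeomorph.addLeft 1, Homeomorph.mulLeft₀ l₁ h₁, Homeomorph.mulLeft₀ l h}
        = insert (Homeomorph.addLeft 1)
            (Set.range fun i => Homeomorph.mulLeft₀ (![l₁, l] i) (hind.ne_zero i)) := by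
    ext; simp [Fin.exists_fin_two, eq_comm]
  obtain ⟨Φ, hΦt, hΦa⟩ := hind₂.exists_mulEquiv_closure_translation_dilations hind₃
    (generators_eq l₂ h₂ hind₂) (generators_eq l₃ h₃ hind₃)
  exact ⟨Φ, hΦt _, hΦa 0 _, hΦa 1 _⟩
end

section
/- Let λ₁ be an irrational real number and let λ₂, λ₃ be nonzero real numbers with λ₂ ≠ λ₃. Then there is no continuous map H : ℝ² → ℝ² satisfying H ∘ τ₁ = τ₁ ∘ H, H ∘ τ₂ = τ₂ ∘ H, H ∘ f_{λ₁} = f_{λ₁} ∘ H and H ∘ f_{λ₂} = f_{λ₃} ∘ H. -/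
/-! Along the `x`-axis, `x ↦ (H (x, 0)).1 - x` is continuous and `1`-periodic (as `H` commutes
with `τ₁`), hence bounded. The relation `H ∘ f_{λ₂} = f_{λ₃} ∘ H` rewrites
`(λ₂ - λ₃) x` as a combination of two values of this bounded function, so it is bounded in `x`,
forcing `λ₂ = λ₃`. -/

open Function

lemma eq_zero_of_forall_abs_mul_le {c M : ℝ} (h : ∀ x, |c * x| ≤ M) : c = 0 := by
  by_contra hc
  have := h ((|M| + 1) / c)
  rw [mul_div_cancel₀ _ hc, abs_of_pos (by positivity)] at this
  linarith [le_abs_self M]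

lemma periodic_fst_sub_of_comp_translate {H : ℝ × ℝ → ℝ × ℝ}
    (hH : H ∘ (fun p : ℝ × ℝ => (p.1 + 1, p.2)) = (fun p : ℝ × ℝ => (p.1 + 1, p.2)) ∘ H)
    (y : ℝ) : Periodic (fun x => (H (x, y)).1 - x) 1 := fun x => by
  have h : (H (x + 1, y)).1 = (H (x, y)).1 + 1 := congrArg Prod.fst (congrFun hH (x, y))
  simp only [h]
  ring

lemma fst_apply_mul_of_comp_scale {H : ℝ × ℝ → ℝ × ℝ} {a b : ℝ}
    (hH : H ∘ (fun p : ℝ × ℝ => (a * p.1, a⁻¹ * p.2))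
      = (fun p : ℝ × ℝ => (b * p.1, b⁻¹ * p.2)) ∘ H)
    (x : ℝ) : (H (a * x, 0)).1 = b * (H (x, 0)).1 := by
  simpa using congrArg Prod.fst (congrFun hH (x, 0))

theorem no_conjugacy_of_affine_actions_general
    (l₁ l₂ l₃ : ℝ)
    (hne : l₂ ≠ l₃) :
    ¬ ∃ H : ℝ × ℝ → ℝ × ℝ, Continuous H ∧
      (H ∘ (fun p : ℝ × ℝ => (p.1 + 1, p.2)) = (fun p : ℝ × ℝ => (p.1 + 1, p.2)) ∘ H) ∧
      (H ∘ (fun p : ℝ × ℝ => (p.1, p.2 + 1)) = (fun p : ℝ × ℝ => (p.1, p.2 + 1)) ∘ H) ∧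
      (H ∘ (fun p : ℝ × ℝ => (l₁ * p.1, l₁⁻¹ * p.2))
        = (fun p : ℝ × ℝ => (l₁ * p.1, l₁⁻¹ * p.2)) ∘ H) ∧
      (H ∘ (fun p : ℝ × ℝ => (l₂ * p.1, l₂⁻¹ * p.2))
        = (fun p : ℝ × ℝ => (l₃ * p.1, l₃⁻¹ * p.2)) ∘ H) := by
  rintro ⟨H, hc, hτ₁, -, -, hf⟩
  set φ : ℝ → ℝ := fun x => (H (x, 0)).1 - x
  have hφ : Continuous φ := by fun_prop
  obtain ⟨M, hM⟩ := isBounded_iff_forall_norm_le.1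
    ((periodic_fst_sub_of_comp_translate hτ₁ 0).isBounded_of_continuous one_ne_zero hφ)
  replace hM : ∀ x, |φ x| ≤ M := fun x => hM _ ⟨x, rfl⟩
  have hlin : ∀ x, (l₂ - l₃) * x = l₃ * φ x - φ (l₂ * x) := fun x => by
    simp only [φ, fst_apply_mul_of_comp_scale hf]
    ring
  refine hne (sub_eq_zero.1 (eq_zero_of_forall_abs_mul_le (M := |l₃| * M + M) fun x => ?_))
  calc |(l₂ - l₃) * x| ≤ |l₃ * φ x| + |φ (l₂ * x)| := hlin x ▸ abs_sub _ _
    _ ≤ |l₃| * M + M := by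
      rw [abs_mul]
      gcongr <;> apply hM

/-- The actions of `⟨τ₁, τ₂, f_{λ₁}, f_{λ₂}⟩` and `⟨τ₁, τ₂, f_{λ₁}, f_{λ₃}⟩` on `ℝ²`
are not conjugate: there is no continuous map `H` of `ℝ²` semiconjugating `τ₁`, `τ₂`
and `f_{λ₁}` to themselves, and `f_{λ₂}` to `f_{λ₃}`. -/
theorem no_conjugacy_of_affine_actions
    (l₁ l₂ l₃ : ℝ) (h₁ : Irrational l₁) (h₂ : l₂ ≠ 0) (h₃ : l₃ ≠ 0)
    (hne : l₂ ≠ l₃) :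
    ¬ ∃ H : ℝ × ℝ → ℝ × ℝ, Continuous H ∧
      (H ∘ (fun p : ℝ × ℝ => (p.1 + 1, p.2)) = (fun p : ℝ × ℝ => (p.1 + 1, p.2)) ∘ H) ∧
      (H ∘ (fun p : ℝ × ℝ => (p.1, p.2 + 1)) = (fun p : ℝ × ℝ => (p.1, p.2 + 1)) ∘ H) ∧
      (H ∘ (fun p : ℝ × ℝ => (l₁ * p.1, l₁⁻¹ * p.2))
        = (fun p : ℝ × ℝ => (l₁ * p.1, l₁⁻¹ * p.2)) ∘ H) ∧
      (H ∘ (fun p : ℝ × ℝ => (l₂ * p.1, l₂⁻¹ * p.2))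
        = (fun p : ℝ × ℝ => (l₃ * p.1, l₃⁻¹ * p.2)) ∘ H) :=
  no_conjugacy_of_affine_actions_general l₁ l₂ l₃ hne
end

section
/- Let λ be an irrational real number. If h : ℝ → ℝ is continuous and satisfies h(x + 1) = h(x) + 1 and h(λx) = λ h(x) for all x ∈ ℝ, then h is the identity map. -/
/-! The displacement `g x = h x - x` is continuous and `1`-periodic, hence bounded, and it is
homogeneous under multiplication by `λ`, hence also by `λ⁻¹`. Since `|λ| ≠ 1`, one of these
dilates by a factor greater than `1`, and iterating it blows up any nonzero value of `g`. -/

open Function Set Bornology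

section Homogeneous

variable {M α β : Type*}

theorem map_pow_smul_of_map_smul [Monoid M] [MulAction M α] [MulAction M β] {f : α → β} {c : M}
    (hf : ∀ x, f (c • x) = c • f x) (n : ℕ) (x : α) : f (c ^ n • x) = c ^ n • f x := by
  induction n with
  | zero => simp only [pow_zero, one_smul]
  | succ n ih => rw [pow_succ', mul_smul, hf, ih, mul_smul]

theorem map_inv_smul_of_map_smul [GroupWithZero M] [MulAction M α] [MulAction M β] {f : α → β}
    {c : M} (hc : c ≠ 0) (hf : ∀ x, f (c • x) = c • f x) (x : α) : f (c⁻¹ • x) = c⁻¹ • f x := by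
  rw [eq_inv_smul_iff₀ hc, ← hf, smul_inv_smul₀ hc]

variable {𝕜 E : Type*} [NormedField 𝕜] [MulAction 𝕜 α] [NormedAddCommGroup E] [NormedSpace 𝕜 E]
  {f : α → E} {c : 𝕜}

theorem eq_zero_of_isBounded_of_map_smul_of_one_lt_norm (hb : IsBounded (range f))
    (hc : 1 < ‖c‖) (hf : ∀ x, f (c • x) = c • f x) : f = 0 := by
  obtain ⟨C, hC⟩ := hb.exists_norm_le
  funext x
  by_contra hx
  have hpos : 0 < ‖f x‖ := norm_pos_iff.mpr hx
  obtain ⟨n, hn⟩ := pow_unbounded_of_one_lt (C / ‖f x‖) hc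
  have hle : ‖c‖ ^ n * ‖f x‖ ≤ C := by
    simpa only [map_pow_smul_of_map_smul hf, norm_smul, norm_pow] using hC _ (mem_range_self (c ^ n • x))
  exact hn.not_ge ((le_div_iff₀ hpos).mpr hle)

theorem eq_zero_of_isBounded_of_map_smul (hb : IsBounded (range f)) (hc₀ : c ≠ 0)
    (hc₁ : ‖c‖ ≠ 1) (hf : ∀ x, f (c • x) = c • f x) : f = 0 := by
  rcases hc₁.lt_or_gt with hlt | hgt
  · refine eq_zero_of_isBounded_of_map_smul_of_one_lt_norm hb ?_ (map_inv_smul_of_map_smul hc₀ hf)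
    rw [norm_inv]
    exact (one_lt_inv₀ (norm_pos_iff.mpr hc₀)).mpr hlt
  · exact eq_zero_of_isBounded_of_map_smul_of_one_lt_norm hb hgt hf

end Homogeneous

theorem Irrational.abs_ne_one {x : ℝ} (hx : Irrational x) : |x| ≠ 1 := fun h =>
  ((abs_eq zero_le_one).mp h).elim hx.ne_one fun h => hx.neg.ne_one (by rw [h, neg_neg])

/-- A continuous map of `ℝ` commuting with `x ↦ x + 1` and with multiplication by an
irrational number `λ` is the identity. -/
theorem commutes_with_translation_and_irrational_scaling_eq_id
    (l : ℝ) (hl : Irrational l) (h : ℝ → ℝ) (hc : Continuous h)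
    (htr : ∀ x : ℝ, h (x + 1) = h x + 1)
    (hsc : ∀ x : ℝ, h (l * x) = l * h x) :
    ∀ x : ℝ, h x = x := by
  set g : ℝ → ℝ := fun x => h x - x
  have hper : Periodic g 1 := fun x => by simp only [g, htr x]; ring
  have hbdd : IsBounded (range g) := hper.isBounded_of_continuous one_ne_zero (hc.sub continuous_id)
  have hhom : ∀ x, g (l • x) = l • g x := fun x => by simp only [g, smul_eq_mul, hsc x]; ring
  have hg : g = 0 := eq_zero_of_isBounded_of_map_smul hbdd hl.ne_zero hl.abs_ne_one hhom
  exact fun x => sub_eq_zero.mp (congrFun hg x)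
end

section
/- Let λ₁, λ₂ be real numbers that are algebraically independent over ℚ. Then every orbit of the subgroup of the homeomorphism group of ℝ² generated by τ₁, τ₂, f_{λ₁} and f_{λ₂} is dense in ℝ²; in particular the action of this group on ℝ² is topologically transitive. -/
open Classical in
/-- For `λ ≠ 0`, the homeomorphism `f_λ : (x,y) ↦ (λx, λ⁻¹y)` of `ℝ²`
(and the identity for the junk value `λ = 0`). -/
noncomputable def fHomeo (l : ℝ) : (ℝ × ℝ) ≃ₜ (ℝ × ℝ) :=
  if h : l ≠ 0 then
    (Homeomorph.mulLeft₀ l h).prodCongr (Homeomorph.mulLeft₀ l⁻¹ (inv_ne_zero h))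
  else Homeomorph.refl _

/-- The translation `τ₁ : (x,y) ↦ (x+1, y)` of `ℝ²`. -/
noncomputable def tau₁ : (ℝ × ℝ) ≃ₜ (ℝ × ℝ) := Homeomorph.addLeft ((1 : ℝ), (0 : ℝ))

/-- The translation `τ₂ : (x,y) ↦ (x, y+1)` of `ℝ²`. -/
noncomputable def tau₂ : (ℝ × ℝ) ≃ₜ (ℝ × ℝ) := Homeomorph.addLeft ((0 : ℝ), (1 : ℝ))

/-!
Conjugating `τ₁` by `f_λ` gives the translation by `(λ, 0)`, and conjugating `τ₂` by `f_λ⁻¹`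
gives the translation by `(0, λ)`. Hence the translations contained in the group form a
subgroup of `ℝ²` containing `Λ × Λ`, where `Λ = ℤ + ℤλ₁`. Since `λ₁` is transcendental, it is
irrational, so `Λ` is dense in `ℝ`; every orbit contains a translate of `Λ × Λ`.
-/

section TranslationSubgroup

variable {E : Type*} [TopologicalSpace E] [AddGroup E] [SeparatelyContinuousAdd E]

theorem Homeomorph.addLeft_mul_addLeft (v w : E) :
    Homeomorph.addLeft v * Homeomorph.addLeft w = Homeomorph.addLeft (v + w) :=
  Homeomorph.ext fun x => (add_assoc v w x).symm

theorem Homeomorph.addLeft_zero : Homeomorph.addLeft (0 : E) = 1 :=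
  Homeomorph.ext zero_add

theorem Homeomorph.inv_addLeft (v : E) : (Homeomorph.addLeft v)⁻¹ = Homeomorph.addLeft (-v) :=
  Homeomorph.addLeft_symm v

def Subgroup.translationSubgroup (G : Subgroup (E ≃ₜ E)) : AddSubgroup E where
  carrier := {v | Homeomorph.addLeft v ∈ G}
  zero_mem' := by simpa only [Set.mem_ofPred_eq, Homeomorph.addLeft_zero] using G.one_mem
  add_mem' {v w} hv hw := by
    simpa only [Set.mem_ofPred_eq, Homeomorph.addLeft_mul_addLeft] using G.mul_mem hv hw
  neg_mem' {v} hv := by simpa only [Set.mem_ofPred_eq, Homeomorph.inv_addLeft] using G.inv_mem hv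

theorem Subgroup.mem_translationSubgroup {G : Subgroup (E ≃ₜ E)} {v : E} :
    v ∈ G.translationSubgroup ↔ Homeomorph.addLeft v ∈ G :=
  Iff.rfl

theorem Subgroup.dense_orbit_of_dense_translationSubgroup {G : Subgroup (E ≃ₜ E)}
    (hG : Dense (G.translationSubgroup : Set E)) (p : E) :
    Dense {q : E | ∃ g ∈ G, g p = q} := by
  refine ((Homeomorph.addRight p).isDenseEmbedding.dense_image.mpr hG).mono ?_
  rintro _ ⟨v, hv, rfl⟩
  exact ⟨Homeomorph.addLeft v, hv, rfl⟩

end TranslationSubgroup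

theorem AddSubgroup.closure_prod_closure_le {A B : Type*} [AddGroup A] [AddGroup B]
    {S : AddSubgroup (A × B)} {s : Set A} {t : Set B}
    (hs : ∀ a ∈ s, (a, 0) ∈ S) (ht : ∀ b ∈ t, (0, b) ∈ S) :
    (closure s).prod (closure t) ≤ S := by
  rw [prod_le_iff, map_le_iff_le_comap, map_le_iff_le_comap, closure_le, closure_le]
  exact ⟨hs, ht⟩

theorem fHomeo_apply {l : ℝ} (hl : l ≠ 0) (v : ℝ × ℝ) : fHomeo l v = (l * v.1, l⁻¹ * v.2) := by
  simp [fHomeo, hl, Prod.map]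

theorem fHomeo_symm_apply {l : ℝ} (hl : l ≠ 0) (v : ℝ × ℝ) :
    (fHomeo l).symm v = (l⁻¹ * v.1, l * v.2) := by
  simp [fHomeo, hl, Prod.map]

theorem fHomeo_mul_tau₁_mul_inv {l : ℝ} (hl : l ≠ 0) :
    fHomeo l * tau₁ * (fHomeo l)⁻¹ = Homeomorph.addLeft (l, 0) := by
  refine Homeomorph.ext fun x => ?_
  show fHomeo l (tau₁ ((fHomeo l).symm x)) = (l, 0) + x
  simp [fHomeo_apply hl, fHomeo_symm_apply hl, tau₁, Prod.ext_iff, mul_add, hl]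

theorem inv_fHomeo_mul_tau₂_mul {l : ℝ} (hl : l ≠ 0) :
    (fHomeo l)⁻¹ * tau₂ * fHomeo l = Homeomorph.addLeft (0, l) := by
  refine Homeomorph.ext fun x => ?_
  show (fHomeo l).symm (tau₂ (fHomeo l x)) = (0, l) + x
  simp [fHomeo_apply hl, fHomeo_symm_apply hl, tau₂, Prod.ext_iff, mul_add, hl]

theorem closure_pair_prod_le_translationSubgroup {G : Subgroup ((ℝ × ℝ) ≃ₜ (ℝ × ℝ))} {l : ℝ}
    (hl : l ≠ 0) (h₁ : tau₁ ∈ G) (h₂ : tau₂ ∈ G) (hf : fHomeo l ∈ G) :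
    (AddSubgroup.closure {l, 1}).prod (AddSubgroup.closure {l, 1}) ≤ G.translationSubgroup := by
  apply AddSubgroup.closure_prod_closure_le
  · rintro a (rfl | rfl) <;> rw [Subgroup.mem_translationSubgroup]
    · rw [← fHomeo_mul_tau₁_mul_inv hl]
      exact G.mul_mem (G.mul_mem hf h₁) (G.inv_mem hf)
    · exact h₁
  · rintro b (rfl | rfl) <;> rw [Subgroup.mem_translationSubgroup]
    · rw [← inv_fHomeo_mul_tau₂_mul hl]
      exact G.mul_mem (G.mul_mem (G.inv_mem hf) h₂) hf
    · exact h₂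

/-- For `λ₁, λ₂` algebraically independent over `ℚ`, every orbit of the group
generated by `τ₁, τ₂, f_{λ₁}, f_{λ₂}` is dense in `ℝ²`; in particular the action is
topologically transitive. -/
theorem affine_example_all_orbits_dense
    (l₁ l₂ : ℝ) (hind : AlgebraicIndependent ℚ ![l₁, l₂]) :
    ∀ p : ℝ × ℝ, Dense {q : ℝ × ℝ | ∃ g ∈ (Subgroup.closure
        {tau₁, tau₂, fHomeo l₁, fHomeo l₂} : Subgroup ((ℝ × ℝ) ≃ₜ (ℝ × ℝ))),
      g p = q} := by
  intro p
  have hirr : Irrational l₁ := by simpa using (hind.transcendental 0).irrational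
  have hΛ : Dense (AddSubgroup.closure {l₁, 1} : Set ℝ) :=
    dense_addSubgroupClosure_pair_iff.mpr (by simpa using hirr)
  refine Subgroup.dense_orbit_of_dense_translationSubgroup ((hΛ.prod hΛ).mono ?_) p
  rw [← AddSubgroup.coe_prod, SetLike.coe_subset_coe]
  exact closure_pair_prod_le_translationSubgroup hirr.ne_zero (Subgroup.subset_closure (by simp))
    (Subgroup.subset_closure (by simp)) (Subgroup.subset_closure (by simp))
end
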